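/- Let k be a field (of any characteristic), let n ≥ 1, let h_0, …, h_{n−1} ∈ Hk, and let L : Hk → Hk be the k-linear operator L(h) = ∂ⁿ(h) + Σ_{i=0}^{n−1} h_i·∂ⁱ(h). Then V = {h ∈ Hk : L(h) = 0} is an n-dimensional k-vector subspace of Hk. -/

import Mathlib

open scoped BigOperators

set_option linter.unusedSectionVars false

/-- The ring of Hurwitz series over `R`: all sequences `ℕ → R`, with termwise addition and
the Hurwitz (binomial-convolution) product. -/
def HS (R : Type*) : Type _ := ℕ → R

namespace HS

variable {R : Type*} [CommRing R]

instance : AddCommGroup (HS R) := Pi.addCommGroup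

instance {S : Type*} [Semiring S] [Module S R] : Module S (HS R) :=
  Pi.module ℕ (fun _ => R) S

@[simp] theorem add_apply (a b : HS R) (n : ℕ) : (a + b) n = a n + b n := rfl
@[simp] theorem zero_apply (n : ℕ) : (0 : HS R) n = 0 := rfl
@[simp] theorem smul_apply {S : Type*} [Semiring S] [Module S R] (c : S) (a : HS R) (n : ℕ) :
    (c • a) n = c • a n := rfl

instance : Mul (HS R) :=
  ⟨fun a b n => ∑ j ∈ Finset.range (n + 1), (n.choose j : R) * a j * b (n - j)⟩

theorem mul_apply (a b : HS R) (n : ℕ) :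
    (a * b) n = ∑ j ∈ Finset.range (n + 1), (n.choose j : R) * a j * b (n - j) := rfl

instance : One (HS R) := ⟨fun n => if n = 0 then 1 else 0⟩

theorem one_apply (n : ℕ) : (1 : HS R) n = if n = 0 then 1 else 0 := rfl

private theorem hmul_comm (a b : HS R) : a * b = b * a := by
  funext n
  rw [mul_apply, mul_apply, ← Finset.sum_range_reflect]
  refine Finset.sum_congr rfl fun j hj => ?_
  have hj' : j ≤ n := Nat.lt_succ_iff.mp (Finset.mem_range.mp hj)
  have h1 : n + 1 - 1 - j = n - j := by omega
  rw [h1, Nat.choose_symm hj', Nat.sub_sub_self hj']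
  ring

private theorem hone_mul (a : HS R) : 1 * a = a := by
  funext n
  rw [mul_apply]
  rw [Finset.sum_eq_single 0]
  · simp [one_apply]
  · intro j hj hj0
    simp [one_apply, hj0]
  · intro h
    exact absurd (Finset.mem_range.mpr (Nat.succ_pos n)) h

private theorem hmul_assoc (a b c : HS R) : a * b * c = a * (b * c) := by
  funext n
  rw [mul_apply, mul_apply]
  simp_rw [mul_apply, Finset.mul_sum]
  simp_rw [Finset.sum_mul]
  rw [Finset.sum_sigma', Finset.sum_sigma']
  refine Finset.sum_nbij' (fun x => ⟨x.2, x.1 - x.2⟩) (fun x => ⟨x.1 + x.2, x.1⟩)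
    ?_ ?_ ?_ ?_ ?_
  · rintro ⟨p, i⟩ h
    simp only [Finset.mem_sigma, Finset.mem_range] at h ⊢
    omega
  · rintro ⟨i, j⟩ h
    simp only [Finset.mem_sigma, Finset.mem_range] at h ⊢
    omega
  · rintro ⟨p, i⟩ h
    simp only [Finset.mem_sigma, Finset.mem_range] at h
    dsimp only
    exact congrArg (fun m => (⟨m, i⟩ : Σ _ : ℕ, ℕ)) (by omega)
  · rintro ⟨i, j⟩ h
    simp only [Finset.mem_sigma, Finset.mem_range] at h
    dsimp only
    exact congrArg (fun m => (⟨i, m⟩ : Σ _ : ℕ, ℕ)) (by omega)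
  · rintro ⟨p, i⟩ h
    simp only [Finset.mem_sigma, Finset.mem_range] at h
    have hip : i ≤ p := by omega
    have hpn : p ≤ n := by omega
    have h2 : n - i - (p - i) = n - p := by omega
    have h3 : (n.choose p : R) * (p.choose i : R)
        = (n.choose i : R) * ((n - i).choose (p - i) : R) := by
      rw [← Nat.cast_mul, ← Nat.cast_mul, Nat.choose_mul (n := n) hip]
    simp only [h2]
    calc ((n.choose p : R) * ((p.choose i : R) * a i * b (p - i)) * c (n - p))
        = ((n.choose p : R) * (p.choose i : R)) * (a i * b (p - i) * c (n - p)) := by ring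
      _ = ((n.choose i : R) * ((n - i).choose (p - i) : R)) * (a i * b (p - i) * c (n - p)) := by
          rw [h3]
      _ = (n.choose i : R) * a i * (((n - i).choose (p - i) : R) * b (p - i) * c (n - p)) := by
          ring

instance : CommRing (HS R) :=
  { (inferInstance : AddCommGroup (HS R)) with
    mul := (· * ·)
    one := (1 : HS R)
    mul_assoc := hmul_assoc
    one_mul := hone_mul
    mul_one := fun a => by rw [hmul_comm]; exact hone_mul a
    left_distrib := fun a b c => by
      funext n
      simp only [mul_apply, add_apply]
      rw [← Finset.sum_add_distrib]
      exact Finset.sum_congr rfl fun j _ => by ring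
    right_distrib := fun a b c => by
      funext n
      simp only [mul_apply, add_apply]
      rw [← Finset.sum_add_distrib]
      exact Finset.sum_congr rfl fun j _ => by ring
    zero_mul := fun a => by funext n; simp [mul_apply]
    mul_zero := fun a => by funext n; simp [mul_apply]
    mul_comm := hmul_comm }

/-- The derivation `∂` on Hurwitz series: the left-shift. -/
def D (a : HS R) : HS R := fun n => a (n + 1)

@[simp] theorem D_apply (a : HS R) (n : ℕ) : D a n = a (n + 1) := rfl

/-- The exponential `exp β = (1, β, β², …)`. -/
def hexp (b : R) : HS R := fun n => b ^ n

@[simp] theorem hexp_apply (b : R) (n : ℕ) : hexp b n = b ^ n := rfl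

/-- The divided power `x^{[i]}`: the sequence with `1` in position `i` and `0` elsewhere. -/
def dpow (i : ℕ) : HS R := fun n => if n = i then 1 else 0

/-- The constant Hurwitz series `(r, 0, 0, …)`. -/
def const (r : R) : HS R := fun n => if n = 0 then r else 0

/-- Entrywise map of a Hurwitz series along a map of coefficients. -/
def map {K L : Type*} (f : K → L) (a : HS K) : HS L := fun n => f (a n)

/-- `σ` is a differential automorphism of the subspace `V` of `HS k`:
a `k`-linear automorphism of `V` commuting with the derivation `D`. -/
def IsDiffAut {k : Type*} [Field k] (V : Submodule k (HS k)) (σ : V ≃ₗ[k] V) : Prop :=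
  ∀ v w : V, (w : HS k) = D (v : HS k) → (σ w : HS k) = D (σ v : HS k)

end HS

/-- The nilpotent upper Jordan block of size `m` (ones on the superdiagonal). -/
def jordanBlock (k : Type*) [Field k] (m : ℕ) : Matrix (Fin m) (Fin m) k :=
  Matrix.of fun i j => if (i : ℕ) + 1 = (j : ℕ) then 1 else 0

/-- The centralizer of a matrix `A` inside `GL(m, k)`, as a set of matrices. -/
def matCent {k : Type*} [Field k] {m : ℕ} (A : Matrix (Fin m) (Fin m) k) :
    Set (Matrix (Fin m) (Fin m) k) :=
  {T | IsUnit T ∧ A * T = T * A}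

/-- The group `U(m, k)` of upper triangular matrices in `GL(m, k)` with all diagonal
entries equal to `1`, as a set of matrices. -/
def uniUpper (k : Type*) [Field k] (m : ℕ) : Set (Matrix (Fin m) (Fin m) k) :=
  {T | IsUnit T ∧ (∀ i, T i i = 1) ∧ ∀ i j : Fin m, (j : ℕ) < (i : ℕ) → T i j = 0}

/-!
Read at index `m`, the equation `∂ⁿ y + ∑ i, hᵢ ∂ⁱ y = 0` says
`y (m + n) = -∑ i, ∑ j ≤ m, C(m, j) hᵢ(j) y(m - j + i)`, and every index on the right is
`< m + n` because `i < n`. So a solution is an arbitrary choice of `y 0, …, y (n - 1)` continued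
by this recurrence, and taking the first `n` coefficients is a linear isomorphism `V ≃ kⁿ`.
-/

section Recurrence

variable {α : Type*} {n : ℕ} {G : ℕ → (ℕ → α) → α}

def IsCausalRecurrence (n : ℕ) (G : ℕ → (ℕ → α) → α) : Prop :=
  ∀ m (y z : ℕ → α), (∀ t < m + n, y t = z t) → G m y = G m z

theorem eq_of_recurrence (hG : IsCausalRecurrence n G) {y z : ℕ → α}
    (hy : ∀ m, y (m + n) = G m y) (hz : ∀ m, z (m + n) = G m z) (h0 : ∀ t < n, y t = z t) :
    y = z := by
  funext t
  induction t using Nat.strong_induction_on with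
  | _ t ih =>
    rcases lt_or_ge t n with ht | ht
    · exact h0 t ht
    · obtain ⟨m, rfl⟩ := Nat.exists_eq_add_of_le' ht
      rw [hy, hz]
      exact hG m y z ih

-- Values not computed yet are padded with `v`; causality of `G` makes the padding irrelevant.
variable (n G) in
def recurrenceSolution (v : ℕ → α) : ℕ → α
  | t => if t < n then v t else G (t - n) fun s => if _ : s < t then recurrenceSolution v s else v s

theorem recurrenceSolution_of_lt (v : ℕ → α) {t : ℕ} (ht : t < n) :
    recurrenceSolution n G v t = v t := by
  rw [recurrenceSolution, if_pos ht]

theorem recurrenceSolution_add (hG : IsCausalRecurrence n G) (v : ℕ → α) (m : ℕ) :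
    recurrenceSolution n G v (m + n) = G m (recurrenceSolution n G v) := by
  rw [recurrenceSolution, if_neg (by omega), Nat.add_sub_cancel]
  exact hG m _ _ fun t ht => dif_pos ht

end Recurrence

namespace HS

variable {R : Type*} [CommRing R]

theorem iterate_D_apply (j : ℕ) (y : HS R) (m : ℕ) : D^[j] y m = y (m + j) := by
  induction j generalizing y with
  | zero => rfl
  | succ j ih => rw [Function.iterate_succ_apply, ih]; rfl

theorem sum_apply {ι : Type*} (s : Finset ι) (f : ι → HS R) (m : ℕ) :
    (∑ i ∈ s, f i) m = ∑ i ∈ s, f i m :=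
  Finset.sum_apply m s f

variable {n : ℕ} (h : Fin n → HS R)

def diffOp : HS R →ₗ[R] HS R where
  toFun y := D^[n] y + ∑ i, h i * D^[i] y
  map_add' a b := by
    funext m
    simp only [add_apply, sum_apply, mul_apply, iterate_D_apply, mul_add, Finset.sum_add_distrib]
    ring
  map_smul' c a := by
    funext m
    simp only [add_apply, smul_apply, sum_apply, mul_apply, iterate_D_apply, smul_eq_mul,
      RingHom.id_apply, mul_add, Finset.mul_sum, mul_left_comm c]

theorem diffOp_apply (y : HS R) (m : ℕ) :
    diffOp h y m = y (m + n) + ∑ i, ∑ j ∈ Finset.range (m + 1),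
      (m.choose j : R) * h i j * y (m - j + i) := by
  change (D^[n] y + ∑ i, h i * D^[i] y) m = _
  simp only [add_apply, sum_apply, mul_apply, iterate_D_apply]

def diffOpRecurrence (m : ℕ) (y : ℕ → R) : R :=
  -∑ i, ∑ j ∈ Finset.range (m + 1), (m.choose j : R) * h i j * y (m - j + i)

theorem isCausalRecurrence_diffOpRecurrence : IsCausalRecurrence n (diffOpRecurrence h) := by
  intro m y z hyz
  simp only [diffOpRecurrence]
  congr 1
  refine Finset.sum_congr rfl fun i _ => Finset.sum_congr rfl fun j hj => ?_
  rw [hyz _ (by have := Finset.mem_range.mp hj; omega)]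

theorem mem_ker_diffOp_iff {y : HS R} :
    y ∈ LinearMap.ker (diffOp h) ↔ ∀ m, y (m + n) = diffOpRecurrence h m y := by
  refine LinearMap.mem_ker.trans (funext_iff.trans (forall_congr' fun m => ?_))
  rw [diffOp_apply, zero_apply]
  exact eq_neg_iff_add_eq_zero.symm

variable (n) in
def initialValues : HS R →ₗ[R] (Fin n → R) where
  toFun y i := y i
  map_add' _ _ := rfl
  map_smul' _ _ := rfl

theorem injective_initialValues_ker_diffOp :
    Function.Injective ((initialValues n).domRestrict (LinearMap.ker (diffOp h))) := by
  rintro ⟨y, hy⟩ ⟨z, hz⟩ hyz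
  refine Subtype.ext (eq_of_recurrence (isCausalRecurrence_diffOpRecurrence h)
    ((mem_ker_diffOp_iff h).mp hy) ((mem_ker_diffOp_iff h).mp hz) fun t ht => ?_)
  exact congrFun hyz ⟨t, ht⟩

theorem surjective_initialValues_ker_diffOp :
    Function.Surjective ((initialValues n).domRestrict (LinearMap.ker (diffOp h))) := by
  intro v
  let y : HS R := recurrenceSolution n (diffOpRecurrence h)
    fun t => if ht : t < n then v ⟨t, ht⟩ else 0
  have hy : y ∈ LinearMap.ker (diffOp h) :=
    (mem_ker_diffOp_iff h).mpr (recurrenceSolution_add (isCausalRecurrence_diffOpRecurrence h) _)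
  refine ⟨⟨y, hy⟩, funext fun i => ?_⟩
  exact (recurrenceSolution_of_lt _ i.isLt).trans (dif_pos i.isLt)

noncomputable def kerDiffOpEquiv : LinearMap.ker (diffOp h) ≃ₗ[R] (Fin n → R) :=
  LinearEquiv.ofBijective _
    ⟨injective_initialValues_ker_diffOp h, surjective_initialValues_ker_diffOp h⟩

theorem finrank_ker_diffOp [Nontrivial R] : Module.finrank R (LinearMap.ker (diffOp h)) = n :=
  (kerDiffOpEquiv h).finrank_eq.trans (Module.finrank_fin_fun R)

end HS

theorem stmt_1_general {k : Type*} [Field k] (n : ℕ) (h : Fin n → HS k) :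
    ∃ W : Submodule k (HS k),
      (W : Set (HS k)) =
        {y : HS k | HS.D^[n] y + ∑ i : Fin n, h i * HS.D^[(i : ℕ)] y = 0} ∧
      Module.finrank k W = n :=
  ⟨LinearMap.ker (HS.diffOp h), rfl, HS.finrank_ker_diffOp h⟩

/-- For a field `k`, `n ≥ 1` and `h₀, …, h_{n-1} ∈ Hk`, the solution set
`V = {h ∈ Hk | ∂ⁿ h + ∑_{i<n} hᵢ ∂ⁱ h = 0}` is an `n`-dimensional `k`-subspace of `Hk`. -/
theorem stmt_1 {k : Type*} [Field k] (n : ℕ) (hn : 1 ≤ n) (h : Fin n → HS k) :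
    ∃ W : Submodule k (HS k),
      (W : Set (HS k)) =
        {y : HS k | HS.D^[n] y + ∑ i : Fin n, h i * HS.D^[(i : ℕ)] y = 0} ∧
      Module.finrank k W = n :=
  stmt_1_general n h
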